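/- arXiv:1411.6225 — 2 statements merged into one kernel-verified Lean document; each statement's English description precedes it below -/
import Mathlib

section
/- Let Λ ⊆ E be a finite subset of a Euclidean space E, α ∈ E a nonzero vector, Q ⊆ E a subset, and define ⟨Λ⟩ = conv(Λ) ∩ (Λ + Q). Suppose H ⊆ E is a linear subspace with α ∉ H, and K ⊆ ⟨Λ⟩ is a finite subset such that (K − K) ∩ ((ℝα) \ {0}) = ∅, and for every x ∈ K the number of points of ⟨Λ⟩ on the line x + ℝα is at least |⟨x, α̌⟩| + 1, where α̌ = 2α/(α,α). Then |⟨Λ⟩ \ H| ≥ Σ_{x∈K} ⟨x, α̌⟩. -/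
/-!
Each line `x + ℝα` meets `H` in at most one point because `α ∉ H`, so a line carrying at least
`|⟨x, α̌⟩| + 1` points of `⟨Λ⟩` carries at least `|⟨x, α̌⟩|` of them outside `H`. The lines through
distinct points of `K` are disjoint, so these points outside `H` are all distinct.
-/

open Set
open scoped Pointwise

theorem subsingleton_line_inter_submodule {K V : Type*} [Field K] [AddCommGroup V] [Module K V]
    (x : V) {α : V} {H : Submodule K V} (hαH : α ∉ H) :
    ({y | ∃ t : K, y = x + t • α} ∩ H).Subsingleton := by
  rintro _ ⟨⟨s, rfl⟩, hs⟩ _ ⟨⟨t, rfl⟩, ht⟩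
  by_contra hne
  have hst : s - t ≠ 0 := sub_ne_zero.2 fun h ↦ hne (by rw [h])
  have hdiff : (x + s • α) - (x + t • α) = (s - t) • α := by rw [sub_smul]; abel
  apply hαH
  simpa [hdiff, smul_smul, inv_mul_cancel₀ hst] using H.smul_mem (s - t)⁻¹ (H.sub_mem hs ht)

theorem disjoint_lines_of_sub_notMem_span {R V : Type*} [Ring R] [AddCommGroup V] [Module R V]
    {x x' α : V} (h : x - x' ∉ {z | ∃ t : R, z = t • α}) :
    Disjoint {y | ∃ t : R, y = x + t • α} {y | ∃ t : R, y = x' + t • α} := by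
  refine Set.disjoint_left.2 ?_
  rintro _ ⟨t, rfl⟩ ⟨t', ht'⟩
  exact h ⟨t' - t, by rw [sub_smul, sub_eq_sub_iff_add_eq_add, ht', add_comm]⟩

theorem Set.Finite.ncard_le_ncard_sdiff_add_one {α : Type*} {s t : Set α} (hs : s.Finite)
    (h : (s ∩ t).Subsingleton) : s.ncard ≤ (s \ t).ncard + 1 := by
  rw [← ncard_inter_add_ncard_sdiff_eq_ncard s t hs, add_comm]
  exact Nat.add_le_add_left ((ncard_le_one (hs.inter_of_left t)).2 h) _

theorem Finset.sum_ncard_le_ncard_of_pairwiseDisjoint {ι α : Type*} {s : Set α} (hs : s.Finite)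
    (I : Finset ι) {f : ι → Set α} (hdisj : (I : Set ι).PairwiseDisjoint f)
    (hsub : ∀ i ∈ I, f i ⊆ s) : ∑ i ∈ I, (f i).ncard ≤ s.ncard := by
  rw [← finsum_mem_coe_finset,
    ← I.finite_toSet.ncard_biUnion (fun i hi ↦ hs.subset (hsub i hi)) hdisj]
  exact ncard_le_ncard (iUnion₂_subset hsub) hs

theorem stmt_0_general {E : Type*} [NormedAddCommGroup E] [InnerProductSpace ℝ E]
    (Λ Q : Set E)
    (hfin : (convexHull ℝ Λ ∩ (Λ + Q)).Finite)
    (α : E)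
    (H : Submodule ℝ E) (hαH : α ∉ H)
    (K : Finset E)
    (hKdiff : ((↑K - ↑K : Set E) ∩ ({x | ∃ t : ℝ, x = t • α} \ {0})) = ∅)
    (hline : ∀ x ∈ K,
      |(inner ℝ x ((2 / (inner ℝ α α : ℝ)) • α) : ℝ)| + 1 ≤
        (((convexHull ℝ Λ ∩ (Λ + Q)) ∩ {y | ∃ t : ℝ, y = x + t • α}).ncard : ℝ)) :
    ∑ x ∈ K, (inner ℝ x ((2 / (inner ℝ α α : ℝ)) • α) : ℝ) ≤
      (((convexHull ℝ Λ ∩ (Λ + Q)) \ ↑H).ncard : ℝ) := by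
  set S := convexHull ℝ Λ ∩ (Λ + Q)
  set line : E → Set E := fun x ↦ {y | ∃ t : ℝ, y = x + t • α}
  have hoff : ∀ x ∈ K, |(inner ℝ x ((2 / (inner ℝ α α : ℝ)) • α) : ℝ)| ≤
      (((S ∩ line x) \ H).ncard : ℝ) := fun x hx ↦ by
    have hle : ((S ∩ line x).ncard : ℝ) ≤ ((S ∩ line x) \ H).ncard + 1 := by
      exact_mod_cast (hfin.inter_of_left (line x)).ncard_le_ncard_sdiff_add_one
        ((subsingleton_line_inter_submodule x hαH).anti (inter_subset_inter_left _ inter_subset_right))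
    linarith [hline x hx]
  have hdisj : (K : Set E).PairwiseDisjoint fun x ↦ (S ∩ line x) \ H := by
    intro x hx x' hx' hne
    refine (disjoint_lines_of_sub_notMem_span fun hspan ↦ ?_).mono
      (sdiff_subset.trans inter_subset_right) (sdiff_subset.trans inter_subset_right)
    exact (Set.eq_empty_iff_forall_notMem.1 hKdiff) (x - x')
      ⟨sub_mem_sub hx hx', hspan, sub_ne_zero.2 hne⟩
  calc ∑ x ∈ K, (inner ℝ x ((2 / (inner ℝ α α : ℝ)) • α) : ℝ)
      ≤ ∑ x ∈ K, (((S ∩ line x) \ H).ncard : ℝ) :=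
        Finset.sum_le_sum fun x hx ↦ (le_abs_self _).trans (hoff x hx)
    _ ≤ ((S \ H).ncard : ℝ) := by
        exact_mod_cast K.sum_ncard_le_ncard_of_pairwiseDisjoint hfin.sdiff hdisj
          fun x _ ↦ sdiff_subset_sdiff_left inter_subset_left

/-- counting points of ⟨Λ⟩ = conv(Λ) ∩ (Λ + Q) outside a subspace H
via lines in the direction of a root α, where α̌ = (2/(α,α))·α. -/
theorem stmt_0 {E : Type*} [NormedAddCommGroup E] [InnerProductSpace ℝ E]
    (Λ Q : Set E) (hΛ : Λ.Finite)
    (hfin : (convexHull ℝ Λ ∩ (Λ + Q)).Finite)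
    (α : E) (hα : α ≠ 0)
    (H : Submodule ℝ E) (hαH : α ∉ H)
    (K : Finset E)
    (hKsub : ↑K ⊆ convexHull ℝ Λ ∩ (Λ + Q))
    (hKdiff : ((↑K - ↑K : Set E) ∩ ({x | ∃ t : ℝ, x = t • α} \ {0})) = ∅)
    (hline : ∀ x ∈ K,
      |(inner ℝ x ((2 / (inner ℝ α α : ℝ)) • α) : ℝ)| + 1 ≤
        (((convexHull ℝ Λ ∩ (Λ + Q)) ∩ {y | ∃ t : ℝ, y = x + t • α}).ncard : ℝ)) :
    ∑ x ∈ K, (inner ℝ x ((2 / (inner ℝ α α : ℝ)) • α) : ℝ) ≤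
      (((convexHull ℝ Λ ∩ (Λ + Q)) \ ↑H).ncard : ℝ) :=
  stmt_0_general Λ Q hfin α H hαH K hKdiff hline
end

section
/- In type B_6 (Δ = {±e_i, ±e_i±e_j} ⊆ ℝ⁶, |Δ| = 72), let λ = φ_6 = (1/2)(e_1+⋯+e_6) and Λ = Wλ (the 64 vectors with all coordinates ±1/2). Let H = {x ∈ ℝ⁶ : x₁ + x₃ = x₂ + x₄}. Then |Λ ∩ H| = 24, |Λ \ H| = 40, and 2·|Λ \ H| = 80 > |Δ| + 6 ≥ |Δ \ H| + 6. Moreover the set Ω = {−φ₆, φ₆−(e₁+e₂), φ₆−(e₃+e₄), φ₆−e₅, φ₆−(e₂+e₃+e₆)} ⊆ Λ spans H and satisfies (Ω − Ω) ∩ Δ = ∅. -/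
/-! Λ consists of the vectors with all coordinates ±1/2, i.e. it is the injective image of the
sign patterns `Fin 6 → Bool`; so both counts reduce to counting sign patterns with
ε₁ + ε₃ = ε₂ + ε₄. A root has one or two nonzero coordinates, while the difference of two
vertices of Λ is nonzero exactly where their sign patterns differ: hence (Ω − Ω) ∩ Δ = ∅
because the five sign patterns of Ω pairwise differ in at least three places. Finally
|Δ| ≤ 2·6² = 72, and Ω spans H by an explicit linear combination. -/

open Set
open scoped Pointwise

noncomputable section

/-- The `i`-th standard basis vector of ℝ^r. -/
def eV (r : ℕ) (i : Fin r) : EuclideanSpace ℝ (Fin r) := EuclideanSpace.single i 1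

/-- The root system of type B_r: Δ = {±e_i, ±e_i ± e_j : i ≠ j}. -/
def rootsB (r : ℕ) : Set (EuclideanSpace ℝ (Fin r)) :=
  {v | (∃ i, v = eV r i ∨ v = -eV r i) ∨
    ∃ i j, i ≠ j ∧ ∃ s t : ℝ, (s = 1 ∨ s = -1) ∧ (t = 1 ∨ t = -1) ∧
      v = s • eV r i + t • eV r j}

/-- The orbit of a vector of ℝ^r under the group of signed permutations of the
coordinates (the Weyl group of type B_r). -/
def signedPermOrbit (r : ℕ) (v : EuclideanSpace ℝ (Fin r)) :
    Set (EuclideanSpace ℝ (Fin r)) :=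
  {y | ∃ (σ : Equiv.Perm (Fin r)) (ε : Fin r → ℝ),
    (∀ i, ε i = 1 ∨ ε i = -1) ∧ ∀ i, y i = ε i * v (σ i)}

/-- The fundamental weight φ_r = (1/2)(e_1 + ⋯ + e_r) of type B_r. -/
def phiB (r : ℕ) : EuclideanSpace ℝ (Fin r) := WithLp.toLp 2 (fun _ => 1 / 2)

/-- The orbit Λ = Wφ₆ in type B₆. -/
def LamB6 : Set (EuclideanSpace ℝ (Fin 6)) := signedPermOrbit 6 (phiB 6)

/-- The hyperplane H = {x ∈ ℝ⁶ : x₁ + x₃ = x₂ + x₄}. -/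
def HB6 : Set (EuclideanSpace ℝ (Fin 6)) := {x | x 0 + x 2 = x 1 + x 3}

/-- Ω = {−φ₆, φ₆−(e₁+e₂), φ₆−(e₃+e₄), φ₆−e₅, φ₆−(e₂+e₃+e₆)}. -/
def OmegaB6 : Set (EuclideanSpace ℝ (Fin 6)) :=
  {-phiB 6, phiB 6 - (eV 6 0 + eV 6 1), phiB 6 - (eV 6 2 + eV 6 3),
    phiB 6 - eV 6 4, phiB 6 - (eV 6 1 + eV 6 2 + eV 6 5)}

section SignVectors

variable {r : ℕ}

lemma eV_apply (i k : Fin r) : eV r i k = if k = i then 1 else 0 := by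
  simp [eV]

def halfSignVec (b : Fin r → Bool) : EuclideanSpace ℝ (Fin r) :=
  WithLp.toLp 2 fun i => if b i then 1 / 2 else -(1 / 2)

lemma halfSignVec_apply (b : Fin r → Bool) (i : Fin r) :
    halfSignVec b i = if b i then 1 / 2 else -(1 / 2) := rfl

lemma halfSignVec_sub_apply_ne_zero_iff (b b' : Fin r → Bool) (i : Fin r) :
    (halfSignVec b - halfSignVec b') i ≠ 0 ↔ b i ≠ b' i := by
  simp only [PiLp.sub_apply, halfSignVec_apply]
  cases b i <;> cases b' i <;> norm_num

lemma halfSignVec_injective : Function.Injective (halfSignVec (r := r)) := by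
  intro b b' h
  funext i
  by_contra hi
  exact (halfSignVec_sub_apply_ne_zero_iff b b' i).2 hi (by rw [h, sub_self]; rfl)

lemma mem_signedPermOrbit_phiB_iff {y : EuclideanSpace ℝ (Fin r)} :
    y ∈ signedPermOrbit r (phiB r) ↔ ∀ i, y i = 1 / 2 ∨ y i = -(1 / 2) := by
  constructor
  · rintro ⟨σ, ε, hε, hy⟩ i
    rcases hε i with h | h <;> simp [hy i, h, phiB]
  · intro h
    refine ⟨1, fun i => 2 * y i, fun i => ?_, fun i => ?_⟩
    · rcases h i with h | h <;> norm_num [h]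
    · simp only [phiB, Equiv.Perm.one_apply]
      ring

lemma range_halfSignVec : Set.range (halfSignVec (r := r)) = signedPermOrbit r (phiB r) := by
  ext y
  rw [mem_signedPermOrbit_phiB_iff]
  constructor
  · rintro ⟨b, rfl⟩ i
    cases b i <;> norm_num [halfSignVec_apply]
  · intro h
    refine ⟨fun i => decide (y i = 1 / 2), ?_⟩
    ext i
    rcases h i with h | h <;> norm_num [halfSignVec_apply, h]

end SignVectors

lemma halfSignVec_mem_HB6_iff (b : Fin 6 → Bool) :
    halfSignVec b ∈ HB6 ↔ (b 0).toNat + (b 2).toNat = (b 1).toNat + (b 3).toNat := by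
  simp only [HB6, Set.mem_ofPred_eq, halfSignVec_apply]
  cases b 0 <;> cases b 1 <;> cases b 2 <;> cases b 3 <;> norm_num

lemma ncard_range_inter_of_injective {α β : Type*} {f : α → β} (hf : Function.Injective f)
    (s : Set β) : (Set.range f ∩ s).ncard = (f ⁻¹' s).ncard := by
  rw [← Set.image_preimage_eq_range_inter, Set.ncard_image_of_injective _ hf]

lemma ncard_LamB6_inter_HB6 : (LamB6 ∩ HB6).ncard = 24 := by
  rw [LamB6, ← range_halfSignVec, ncard_range_inter_of_injective halfSignVec_injective]
  simp only [Set.preimage, halfSignVec_mem_HB6_iff]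
  rw [Set.ncard_eq_toFinset_card']
  decide

lemma ncard_LamB6_diff_HB6 : (LamB6 \ HB6).ncard = 40 := by
  rw [LamB6, ← range_halfSignVec, Set.sdiff_eq,
    ncard_range_inter_of_injective halfSignVec_injective]
  simp only [Set.preimage, Set.mem_compl_iff, halfSignVec_mem_HB6_iff]
  rw [Set.ncard_eq_toFinset_card']
  decide

section Roots

variable {r : ℕ}

lemma rootsB_subset_finset :
    rootsB r ⊆ ↑((Finset.univ ×ˢ {1, -1}).image (fun p : Fin r × ℝ => p.2 • eV r p.1) ∪
      (Finset.univ.filter (fun x : Fin r × Fin r => x.1 < x.2) ×ˢ ({1, -1} ×ˢ {1, -1})).image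
        fun q : (Fin r × Fin r) × ℝ × ℝ => q.2.1 • eV r q.1.1 + q.2.2 • eV r q.1.2) := by
  rintro v (⟨i, rfl | rfl⟩ | ⟨i, j, hij, s, t, hs, ht, rfl⟩)
  · exact Finset.mem_union_left _ (Finset.mem_image.2 ⟨(i, 1), by simp⟩)
  · exact Finset.mem_union_left _ (Finset.mem_image.2 ⟨(i, -1), by simp⟩)
  · refine Finset.mem_union_right _ (Finset.mem_image.2 ?_)
    rcases hij.lt_or_gt with h | h
    · exact ⟨((i, j), s, t), by simp [h, hs, ht], rfl⟩
    · exact ⟨((j, i), t, s), by simp [h, hs, ht], add_comm _ _⟩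

lemma finite_rootsB : (rootsB r).Finite :=
  Set.Finite.subset (Finset.finite_toSet _) rootsB_subset_finset

lemma ncard_rootsB_le : (rootsB r).ncard ≤ 2 * r ^ 2 := by
  refine (Set.ncard_le_ncard rootsB_subset_finset (Finset.finite_toSet _)).trans ?_
  rw [Set.ncard_coe_finset]
  refine (Finset.card_union_le _ _).trans ?_
  refine (add_le_add Finset.card_image_le Finset.card_image_le).trans ?_
  rw [Finset.card_product, Finset.card_product, Finset.card_product,
    Fintype.card_product_filter_lt, Finset.card_univ, Fintype.card_fin,
    Finset.card_pair (by norm_num), Nat.choose_two_right]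
  have hsq : r * (r - 1) + r = r ^ 2 := by cases r <;> simp [sq, Nat.mul_succ]
  have := Nat.div_mul_le_self (r * (r - 1)) 2
  omega

lemma exists_apply_ne_zero_of_mem_rootsB {v : EuclideanSpace ℝ (Fin r)} (hv : v ∈ rootsB r) :
    ∃ i, v i ≠ 0 := by
  rcases hv with ⟨i, rfl | rfl⟩ | ⟨i, j, hij, s, t, hs, ht, rfl⟩ <;> refine ⟨i, ?_⟩
  · simp [eV_apply]
  · simp [eV_apply]
  · rcases hs with rfl | rfl <;> simp [eV_apply, hij]

lemma card_support_le_two_of_mem_rootsB {v : EuclideanSpace ℝ (Fin r)} (hv : v ∈ rootsB r) :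
    (Finset.univ.filter fun k => v k ≠ 0).card ≤ 2 := by
  obtain ⟨i, j, hij⟩ : ∃ i j : Fin r, ∀ k, v k ≠ 0 → k = i ∨ k = j := by
    rcases hv with ⟨i, rfl | rfl⟩ | ⟨i, j, -, s, t, -, -, rfl⟩
    · exact ⟨i, i, fun k hk => by simp_all [eV_apply]⟩
    · exact ⟨i, i, fun k hk => by simp_all [eV_apply]⟩
    · refine ⟨i, j, fun k hk => ?_⟩
      by_contra h
      push Not at h
      simp [eV_apply, h.1, h.2] at hk
  calc (Finset.univ.filter fun k => v k ≠ 0).card ≤ ({i, j} : Finset (Fin r)).card :=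
        Finset.card_le_card fun k hk => by simpa using hij k (Finset.mem_filter.1 hk).2
    _ ≤ 2 := Finset.card_le_two

end Roots

lemma ne_and_hammingDist_le_two_of_sub_mem_rootsB {r : ℕ} {b b' : Fin r → Bool}
    (h : halfSignVec b - halfSignVec b' ∈ rootsB r) : b ≠ b' ∧ hammingDist b b' ≤ 2 := by
  obtain ⟨i, hi⟩ := exists_apply_ne_zero_of_mem_rootsB h
  refine ⟨fun hbb' => (halfSignVec_sub_apply_ne_zero_iff b b' i).1 hi (by rw [hbb']), ?_⟩
  calc hammingDist b b'
      = (Finset.univ.filter fun k => (halfSignVec b - halfSignVec b') k ≠ 0).card := by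
        simp only [hammingDist, halfSignVec_sub_apply_ne_zero_iff]
    _ ≤ 2 := card_support_le_two_of_mem_rootsB h

def omegaSigns : Finset (Fin 6 → Bool) :=
  {![false, false, false, false, false, false], ![false, false, true, true, true, true],
    ![true, true, false, false, true, true], ![true, true, true, true, false, true],
    ![true, false, false, true, true, false]}

lemma OmegaB6_eq_image : OmegaB6 = halfSignVec '' (omegaSigns : Set (Fin 6 → Bool)) := by
  simp only [OmegaB6, omegaSigns, Finset.coe_insert, Finset.coe_singleton, Set.image_insert_eq,
    Set.image_singleton]
  refine congrArg₂ _ ?_ (congrArg₂ _ ?_ (congrArg₂ _ ?_ (congrArg₂ _ ?_ (congrArg _ ?_)))) <;>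
    ext i <;> fin_cases i <;> norm_num [Fin.ext_iff, halfSignVec_apply, phiB, eV_apply]

set_option maxRecDepth 4000 in
lemma three_le_hammingDist_omegaSigns :
    ∀ b ∈ omegaSigns, ∀ b' ∈ omegaSigns, b ≠ b' → 3 ≤ hammingDist b b' := by
  decide

lemma OmegaB6_subset_LamB6 : OmegaB6 ⊆ LamB6 := by
  rw [OmegaB6_eq_image, LamB6, ← range_halfSignVec]
  exact Set.image_subset_range _ _

lemma OmegaB6_sub_OmegaB6_inter_rootsB : (OmegaB6 - OmegaB6) ∩ rootsB 6 = ∅ := by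
  rw [Set.eq_empty_iff_forall_notMem, OmegaB6_eq_image]
  rintro _ ⟨⟨_, ⟨b, hb, rfl⟩, _, ⟨b', hb', rfl⟩, rfl⟩, hroot⟩
  obtain ⟨hne, hle⟩ := ne_and_hammingDist_le_two_of_sub_mem_rootsB hroot
  have := three_le_hammingDist_omegaSigns b hb b' hb' hne
  omega

lemma HB6_eq_ker : HB6 = LinearMap.ker
    ((EuclideanSpace.proj 0 + EuclideanSpace.proj 2 - EuclideanSpace.proj 1 -
      EuclideanSpace.proj 3 : EuclideanSpace ℝ (Fin 6) →L[ℝ] ℝ) :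
      EuclideanSpace ℝ (Fin 6) →ₗ[ℝ] ℝ) := by
  ext x
  simp only [HB6, mem_ofPred_eq, ContinuousLinearMap.toLinearMap_sub,
    ContinuousLinearMap.toLinearMap_add, SetLike.mem_coe, LinearMap.mem_ker, LinearMap.sub_apply,
    LinearMap.add_apply, ContinuousLinearMap.coe_coe, PiLp.proj_apply]
  constructor <;> intro h <;> linarith

lemma OmegaB6_subset_HB6 : OmegaB6 ⊆ HB6 := by
  rw [OmegaB6_eq_image]
  rintro _ ⟨b, hb, rfl⟩
  rw [halfSignVec_mem_HB6_iff]
  revert b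
  simp only [Finset.mem_coe]
  decide

lemma span_OmegaB6 : (Submodule.span ℝ OmegaB6 : Set (EuclideanSpace ℝ (Fin 6))) = HB6 := by
  refine Set.Subset.antisymm ?_ fun x hx => ?_
  · rw [HB6_eq_ker]
    exact Submodule.span_le.2 (HB6_eq_ker ▸ OmegaB6_subset_HB6)
  have hx : x 0 + x 2 = x 1 + x 3 := hx
  have hrepr : x = (x 0 - 2 * x 1 - x 3 - x 4 + x 5) • (-phiB 6)
      + (x 5 - x 1) • (phiB 6 - (eV 6 0 + eV 6 1))
      + (x 5 - x 1 + x 0 - x 3) • (phiB 6 - (eV 6 2 + eV 6 3))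
      + (x 0 - x 1 - x 4 + x 5) • (phiB 6 - eV 6 4)
      + (x 0 - x 1) • (phiB 6 - (eV 6 1 + eV 6 2 + eV 6 5)) := by
    ext i
    fin_cases i <;> simp [phiB, eV_apply] <;> linarith
  have hω : ∀ ω ∈ OmegaB6, ω ∈ Submodule.span ℝ OmegaB6 := fun ω h => Submodule.subset_span h
  rw [hrepr]
  refine add_mem (add_mem (add_mem (add_mem ?_ ?_) ?_) ?_) ?_ <;>
    exact Submodule.smul_mem _ _ (hω _ (by simp [OmegaB6]))

/-- in type B₆ with λ = φ₆, Λ = Wλ and H = {x₁ + x₃ = x₂ + x₄}: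
|Λ ∩ H| = 24, |Λ \ H| = 40, 2·|Λ \ H| = 80 > |Δ| + 6 ≥ |Δ \ H| + 6; moreover
Ω ⊆ Λ spans H and (Ω − Ω) ∩ Δ = ∅. -/
theorem stmt_10 :
    (LamB6 ∩ HB6).ncard = 24 ∧
    (LamB6 \ HB6).ncard = 40 ∧
    2 * (LamB6 \ HB6).ncard = 80 ∧
    (rootsB 6).ncard + 6 < 80 ∧
    (rootsB 6 \ HB6).ncard + 6 ≤ (rootsB 6).ncard + 6 ∧
    OmegaB6 ⊆ LamB6 ∧
    (Submodule.span ℝ OmegaB6 : Set (EuclideanSpace ℝ (Fin 6))) = HB6 ∧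
    ((OmegaB6 - OmegaB6) ∩ rootsB 6) = ∅ := by
  refine ⟨ncard_LamB6_inter_HB6, ncard_LamB6_diff_HB6, by rw [ncard_LamB6_diff_HB6], ?_, ?_,
    OmegaB6_subset_LamB6, span_OmegaB6, OmegaB6_sub_OmegaB6_inter_rootsB⟩
  · have := ncard_rootsB_le (r := 6)
    omega
  · exact Nat.add_le_add_right (Set.ncard_le_ncard Set.sdiff_subset finite_rootsB) 6

end
end
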